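/- Hyperbolic Sommerfeld-type integral: Let ε be a real number with 0 < ε < 1 and let x₀ > 0 be the unique positive real with sech²(x₀) = ε (equivalently cosh x₀ = 1/√ε). Then ∫_{−x₀}^{x₀} √(sech²x − ε) dx = π(1 − √ε). -/

import Mathlib

/-!
Write `D = sech² x - sech² x₀`. Since `tanh² x₀ - tanh² x = D` and
`sinh² x₀ - sinh² x = cosh² x cosh² x₀ D`, the functions `arcsin (tanh x / tanh x₀)` and
`sech x₀ · arcsin (sinh x / sinh x₀)` have derivatives `sech² x / √D` and `sech² x₀ / √D` on
`(-x₀, x₀)`, so their difference is a primitive of `√D`. Both arcsines are `±π/2` at `±x₀`,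
and `√ε = sech x₀`.
-/

open Real intervalIntegral

namespace Real

theorem hasDerivAt_tanh (x : ℝ) : HasDerivAt tanh (1 / cosh x ^ 2) x := by
  rw [show tanh = fun y => sinh y / cosh y from funext tanh_eq_sinh_div_cosh]
  refine ((hasDerivAt_sinh x).div (hasDerivAt_cosh x) (cosh_pos x).ne').congr_deriv ?_
  rw [← cosh_sq_sub_sinh_sq x]
  ring

@[fun_prop]
theorem continuous_tanh : Continuous tanh :=
  continuous_iff_continuousAt.2 fun x => (hasDerivAt_tanh x).continuousAt

theorem tanh_sq (x : ℝ) : tanh x ^ 2 = 1 - (1 / cosh x) ^ 2 := by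
  rw [tanh_eq_sinh_div_cosh, div_pow, sinh_sq]
  field_simp

theorem tanh_pos {x : ℝ} (hx : 0 < x) : 0 < tanh x := by
  rw [tanh_eq_sinh_div_cosh]
  exact div_pos (sinh_pos_iff.2 hx) (cosh_pos x)

end Real

theorem HasDerivAt.arcsin_div {f : ℝ → ℝ} {f' c x : ℝ} (hf : HasDerivAt f f' x) (hc : 0 < c)
    (hfx : f x ^ 2 < c ^ 2) :
    HasDerivAt (fun y => arcsin (f y / c)) (f' / √(c ^ 2 - f x ^ 2)) x := by
  have hsq : (f x / c) ^ 2 < 1 := by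
    rwa [div_pow, div_lt_one (by positivity)]
  obtain ⟨hlo, hhi⟩ := abs_lt.1 (sq_lt_one_iff_abs_lt_one _ |>.1 hsq)
  refine ((hasDerivAt_arcsin hlo.ne' hhi.ne).comp x (hf.div_const c)).congr_deriv ?_
  have hrad : 1 - (f x / c) ^ 2 = (c ^ 2 - f x ^ 2) / c ^ 2 := by field_simp
  rw [hrad, sqrt_div' _ (sq_nonneg c), sqrt_sq hc.le]
  have : 0 < √(c ^ 2 - f x ^ 2) := sqrt_pos.2 (by linarith)
  field_simp

noncomputable def sommerfeldPrimitive (x₀ x : ℝ) : ℝ :=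
  arcsin (tanh x / tanh x₀) - (cosh x₀)⁻¹ * arcsin (sinh x / sinh x₀)

theorem continuous_sommerfeldPrimitive (x₀ : ℝ) : Continuous (sommerfeldPrimitive x₀) := by
  unfold sommerfeldPrimitive
  fun_prop

theorem sommerfeldPrimitive_neg (x₀ x : ℝ) :
    sommerfeldPrimitive x₀ (-x) = -sommerfeldPrimitive x₀ x := by
  simp only [sommerfeldPrimitive, tanh_neg, sinh_neg, neg_div, arcsin_neg]
  ring

theorem sommerfeldPrimitive_self {x₀ : ℝ} (hx₀ : 0 < x₀) :
    sommerfeldPrimitive x₀ x₀ = π / 2 * (1 - 1 / cosh x₀) := by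
  rw [sommerfeldPrimitive, div_self (tanh_pos hx₀).ne', div_self (sinh_pos_iff.2 hx₀).ne',
    arcsin_one]
  ring

theorem hasDerivAt_sommerfeldPrimitive {x₀ x : ℝ} (hx₀ : 0 < x₀) (hx : |x| < x₀) :
    HasDerivAt (sommerfeldPrimitive x₀) √((1 / cosh x) ^ 2 - (1 / cosh x₀) ^ 2) x := by
  have hc := cosh_pos x
  have hcC : cosh x < cosh x₀ := cosh_lt_cosh.2 (by rwa [abs_of_pos hx₀])
  set D := (1 / cosh x) ^ 2 - (1 / cosh x₀) ^ 2 with hD_def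
  have hD : 0 < D := sub_pos.2 <| pow_lt_pow_left₀ (one_div_lt_one_div_of_lt hc hcC)
    (by positivity) two_ne_zero
  have htanh : tanh x₀ ^ 2 - tanh x ^ 2 = D := by rw [tanh_sq, tanh_sq]; ring
  have hcosh : cosh x₀ ^ 2 - cosh x ^ 2 = (cosh x * cosh x₀) ^ 2 * D := by
    rw [hD_def]; field_simp
  have hsinh : sinh x₀ ^ 2 - sinh x ^ 2 = (cosh x * cosh x₀) ^ 2 * D := by
    rw [sinh_sq, sinh_sq, ← hcosh]; ring
  have h₁ := (hasDerivAt_tanh x).arcsin_div (tanh_pos hx₀) (by linarith)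
  have h₂ := (hasDerivAt_sinh x).arcsin_div (sinh_pos_iff.2 hx₀) <| by
    have : 0 < (cosh x * cosh x₀) ^ 2 * D := by positivity
    linarith
  refine (h₁.sub (h₂.const_mul (cosh x₀)⁻¹)).congr_deriv ?_
  rw [htanh, hsinh, sqrt_mul (sq_nonneg _), sqrt_sq (by positivity)]
  have : 0 < √D := sqrt_pos.2 hD
  field_simp
  rw [sq_sqrt hD.le]
  linear_combination hcosh

theorem integral_sqrt_sech_sq_sub_sech_sq {x₀ : ℝ} (hx₀ : 0 < x₀) :
    ∫ x in (-x₀)..x₀, √((1 / cosh x) ^ 2 - (1 / cosh x₀) ^ 2) = π * (1 - 1 / cosh x₀) := by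
  have hint : Continuous fun x => √((1 / cosh x) ^ 2 - (1 / cosh x₀) ^ 2) :=
    (((continuous_const.div continuous_cosh fun x => (cosh_pos x).ne').pow 2).sub
      continuous_const).sqrt
  rw [integral_eq_sub_of_hasDerivAt_of_le (by linarith)
    (continuous_sommerfeldPrimitive x₀).continuousOn
    (fun x hx => hasDerivAt_sommerfeldPrimitive hx₀ (abs_lt.2 hx))
    (hint.intervalIntegrable _ _), sommerfeldPrimitive_neg, sommerfeldPrimitive_self hx₀]
  ring

theorem hyperbolic_sommerfeld_integral_general (ε : ℝ)
    (x₀ : ℝ) (hx₀ : 0 < x₀) (hsech : (1 / Real.cosh x₀) ^ 2 = ε) :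
    ∫ x in (-x₀)..x₀, Real.sqrt ((1 / Real.cosh x) ^ 2 - ε)
      = Real.pi * (1 - Real.sqrt ε) := by
  subst hsech
  rw [integral_sqrt_sech_sq_sub_sech_sq hx₀, sqrt_sq (by positivity)]

/-- Hyperbolic Sommerfeld-type integral: for `0 < ε < 1`, with `x₀ > 0` the unique positive
real with `sech²(x₀) = ε`, one has `∫_{-x₀}^{x₀} √(sech²x - ε) dx = π(1 - √ε)`. -/
theorem hyperbolic_sommerfeld_integral (ε : ℝ) (hε₀ : 0 < ε) (hε₁ : ε < 1)
    (x₀ : ℝ) (hx₀ : 0 < x₀) (hsech : (1 / Real.cosh x₀) ^ 2 = ε) :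
    ∫ x in (-x₀)..x₀, Real.sqrt ((1 / Real.cosh x) ^ 2 - ε)
      = Real.pi * (1 - Real.sqrt ε) :=
  hyperbolic_sommerfeld_integral_general ε x₀ hx₀ hsech
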